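/- In the setting of the previous statement, if H̄ > 0 (strain-hardening), then the consistent elastoplastic tangent modulus ℂᵉᵖ(e) = ℂ(e) − (N : ℂ(e)) ℂ(N)/(N : ℂ(N) + H̄) is positive definite on symmetric matrices: e : ℂᵉᵖ(e) > 0 for all e ≠ 0. -/

import Mathlib

noncomputable def fip {d : ℕ} (A B : Matrix (Fin d) (Fin d) ℝ) : ℝ :=
  ∑ i, ∑ j, A i j * B i j

noncomputable def Cep {d : ℕ}
    (C : Matrix (Fin d) (Fin d) ℝ →ₗ[ℝ] Matrix (Fin d) (Fin d) ℝ)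
    (N : Matrix (Fin d) (Fin d) ℝ) (Hbar : ℝ)
    (e : Matrix (Fin d) (Fin d) ℝ) : Matrix (Fin d) (Fin d) ℝ :=
  C e - (fip N (C e) / (fip N (C N) + Hbar)) • C N

/-! The key fact is the Cauchy–Schwarz inequality `(N : ℂ e)² ≤ (N : ℂ N) (e : ℂ e)` for the
form `(x, y) ↦ x : ℂ y`, which is symmetric and positive semidefinite on the symmetric matrices.
Then `e : ℂᵉᵖ e = e : ℂ e - (N : ℂ e)² / (N : ℂ N + H̄)`, and `H̄ > 0` makes the subtracted
term strictly smaller than `e : ℂ e`. -/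

def Matrix.symmetricSubmodule (n R : Type*) [CommSemiring R] : Submodule R (Matrix n n R) where
  carrier := {A | A.IsSymm}
  add_mem' := Matrix.IsSymm.add
  zero_mem' := Matrix.isSymm_zero
  smul_mem' c _ hA := hA.smul c

section

variable {d : ℕ}

noncomputable def fipForm : LinearMap.BilinForm ℝ (Matrix (Fin d) (Fin d) ℝ) :=
  LinearMap.mk₂ ℝ fip
    (fun A A' B => by simp only [fip, Matrix.add_apply, add_mul, Finset.sum_add_distrib])
    (fun c A B => by simp only [fip, Matrix.smul_apply, smul_eq_mul, mul_assoc, Finset.mul_sum])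
    (fun A B B' => by simp only [fip, Matrix.add_apply, mul_add, Finset.sum_add_distrib])
    (fun c A B => by
      simp only [fip, Matrix.smul_apply, smul_eq_mul, mul_left_comm, Finset.mul_sum])

@[simp]
lemma fipForm_apply (A B : Matrix (Fin d) (Fin d) ℝ) : fipForm A B = fip A B := rfl

lemma fip_comm (A B : Matrix (Fin d) (Fin d) ℝ) : fip A B = fip B A := by
  simp only [fip, mul_comm]

variable (C : Matrix (Fin d) (Fin d) ℝ →ₗ[ℝ] Matrix (Fin d) (Fin d) ℝ)

lemma sq_fip_le_of_isSymm (hCsymm : ∀ a b, fip (C a) b = fip a (C b))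
    (hCnonneg : ∀ e : Matrix (Fin d) (Fin d) ℝ, e.IsSymm → 0 ≤ fip e (C e))
    {e N : Matrix (Fin d) (Fin d) ℝ} (he : e.IsSymm) (hN : N.IsSymm) :
    fip N (C e) ^ 2 ≤ fip N (C N) * fip e (C e) := by
  let B := LinearMap.BilinForm.restrict (fipForm.compl₂ C) (Matrix.symmetricSubmodule (Fin d) ℝ)
  have hBsymm : LinearMap.IsSymm B := ⟨fun x y => by
    change fip x.1 (C y.1) = fip y.1 (C x.1)
    rw [← hCsymm, fip_comm]⟩
  exact B.apply_sq_le_of_symm (fun x => hCnonneg x x.2) hBsymm ⟨N, hN⟩ ⟨e, he⟩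

lemma fip_Cep (hCsymm : ∀ a b, fip (C a) b = fip a (C b)) (N e : Matrix (Fin d) (Fin d) ℝ)
    (Hbar : ℝ) :
    fip e (Cep C N Hbar e) = fip e (C e) - fip N (C e) ^ 2 / (fip N (C N) + Hbar) := by
  have hsymm : fip e (C N) = fip N (C e) := by rw [← hCsymm, fip_comm]
  rw [← fipForm_apply, Cep, map_sub, map_smul, smul_eq_mul, fipForm_apply, fipForm_apply,
    hsymm]
  ring

end

theorem stmt_8_general (d : ℕ)
    (C : Matrix (Fin d) (Fin d) ℝ →ₗ[ℝ] Matrix (Fin d) (Fin d) ℝ)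
    (hCsymm : ∀ a b, fip (C a) b = fip a (C b))
    (hCpos : ∀ e : Matrix (Fin d) (Fin d) ℝ, e.IsSymm → e ≠ 0 → 0 < fip e (C e))
    (N : Matrix (Fin d) (Fin d) ℝ) (hN : N.IsSymm)
    (Hbar : ℝ) (hH : 0 < Hbar) :
    ∀ e : Matrix (Fin d) (Fin d) ℝ, e.IsSymm → e ≠ 0 →
      0 < fip e (Cep C N Hbar e) := by
  intro e he he0
  have hCnonneg (x : Matrix (Fin d) (Fin d) ℝ) (hx : x.IsSymm) : 0 ≤ fip x (C x) := by
    rcases eq_or_ne x 0 with rfl | hx0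
    · simp [fip]
    · exact (hCpos x hx hx0).le
  have hNN := hCnonneg N hN
  have hee := hCpos e he he0
  have hCS := sq_fip_le_of_isSymm C hCsymm hCnonneg he hN
  rw [fip_Cep C hCsymm, sub_pos, div_lt_iff₀ (by linarith)]
  nlinarith [mul_pos hH hee]

/-- for strain-hardening (H̄ > 0), the consistent elastoplastic
tangent modulus is positive definite on symmetric matrices. -/
theorem stmt_8 (d : ℕ)
    (C : Matrix (Fin d) (Fin d) ℝ →ₗ[ℝ] Matrix (Fin d) (Fin d) ℝ)
    (hCsymm : ∀ a b, fip (C a) b = fip a (C b))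
    (hCpos : ∀ e : Matrix (Fin d) (Fin d) ℝ, e.IsSymm → e ≠ 0 → 0 < fip e (C e))
    (N : Matrix (Fin d) (Fin d) ℝ) (hN : N.IsSymm) (hN0 : N ≠ 0)
    (Hbar : ℝ) (hH : 0 < Hbar) :
    ∀ e : Matrix (Fin d) (Fin d) ℝ, e.IsSymm → e ≠ 0 →
      0 < fip e (Cep C N Hbar e) :=
  stmt_8_general d C hCsymm hCpos N hN Hbar hH
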